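/- arXiv:2206.12365 — 5 statements merged into one kernel-verified Lean document; each statement's English description precedes it below -/
import Mathlib

section
/- For every integer J ≥ 2, the Mallows normalizing function ψ is strictly convex on the interval (0, ∞). -/
/-!
For `θ ≠ 0` each factor of `ψ` is the geometric sum `∑_{k<j} e^{-kθ}`, so `ψ(θ) = P(e^{-θ})` for
the polynomial `P = ∏_{j=1}^J (1 + X + ⋯ + X^{j-1})`. Thus `ψ(θ) = ∑_m c_m e^{-mθ}` with all
`c_m ≥ 0`, a nonnegative combination of convex exponentials. For `J ≥ 2` the polynomial `P` is
nonconstant, and its leading term `c_N e^{-Nθ}` with `N ≥ 1`, `c_N > 0` is strictly convex.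
-/

open Finset Real Polynomial

/-- The Mallows normalizing function
`ψ(θ) = ∏_{j=1}^J (1 − e^{−jθ})/(1 − e^{−θ})`. -/
noncomputable def mallowsPsi (J : ℕ) (θ : ℝ) : ℝ :=
  ∏ j ∈ Finset.Icc 1 J, (1 - Real.exp (-(j : ℝ) * θ)) / (1 - Real.exp (-θ))

theorem strictConvexOn_mul_exp_mul {a c : ℝ} (ha : 0 < a) (hc : c ≠ 0) :
    StrictConvexOn ℝ Set.univ fun x => a * exp (c * x) := by
  refine ⟨convex_univ, fun x _ y _ hxy s t hs ht hst => ?_⟩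
  have hexp := strictConvexOn_exp.2 (Set.mem_univ (c * x)) (Set.mem_univ (c * y))
    (by simpa [hc] using hxy) hs ht hst
  simp only [smul_eq_mul] at hexp ⊢
  calc a * exp (c * (s * x + t * y)) = a * exp (s * (c * x) + t * (c * y)) := by ring_nf
    _ < a * (s * exp (c * x) + t * exp (c * y)) := mul_lt_mul_of_pos_left hexp ha
    _ = s * (a * exp (c * x)) + t * (a * exp (c * y)) := by ring

theorem convexOn_mul_exp_mul {a : ℝ} (ha : 0 ≤ a) (c : ℝ) :
    ConvexOn ℝ Set.univ fun x => a * exp (c * x) := by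
  rcases ha.eq_or_lt with rfl | ha
  · simpa using convexOn_const (0 : ℝ) convex_univ
  rcases eq_or_ne c 0 with rfl | hc
  · simpa using convexOn_const a convex_univ
  exact (strictConvexOn_mul_exp_mul ha hc).convexOn

theorem Polynomial.coeff_prod_nonneg {ι R : Type*} [CommSemiring R] [PartialOrder R]
    [IsOrderedRing R] {s : Finset ι} {f : ι → R[X]} (hf : ∀ i ∈ s, ∀ n, 0 ≤ (f i).coeff n)
    (n : ℕ) : 0 ≤ (∏ i ∈ s, f i).coeff n := by
  refine Finset.prod_induction f (fun P => ∀ n, 0 ≤ P.coeff n) (fun P Q hP hQ n => ?_)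
    (fun n => ?_) hf n
  · rw [coeff_mul]
    exact sum_nonneg fun _ _ => mul_nonneg (hP _) (hQ _)
  · rw [coeff_one]
    split_ifs <;> simp

theorem Polynomial.strictConvexOn_eval_exp_neg {P : ℝ[X]} (hP : ∀ n, 0 ≤ P.coeff n)
    (hdeg : 0 < P.natDegree) : StrictConvexOn ℝ Set.univ fun θ => P.eval (exp (-θ)) := by
  have hsum : (fun θ => P.eval (exp (-θ))) = fun θ =>
      (∑ m ∈ range P.natDegree, P.coeff m * exp (-m * θ)) +
        P.leadingCoeff * exp (-P.natDegree * θ) := by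
    funext θ
    simp only [eval_eq_sum_range, sum_range_succ, ← exp_nat_mul, neg_mul, mul_neg, leadingCoeff]
  have hlead : 0 < P.leadingCoeff :=
    (hP _).lt_of_ne' (leadingCoeff_ne_zero.2 (ne_zero_of_natDegree_gt hdeg))
  have hlower :
      ConvexOn ℝ Set.univ fun θ => ∑ m ∈ range P.natDegree, P.coeff m * exp (-m * θ) := by
    have := Finset.sum_induction (s := range P.natDegree) (fun m θ => P.coeff m * exp (-m * θ))
      (ConvexOn ℝ Set.univ) (fun _ _ => ConvexOn.add) (convexOn_const 0 convex_univ)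
      (fun m _ => convexOn_mul_exp_mul (hP m) _)
    simpa only [Finset.sum_fn] using this
  rw [hsum]
  exact hlower.add_strictConvexOn (strictConvexOn_mul_exp_mul hlead (by simpa using hdeg.ne'))

theorem one_sub_exp_neg_mul_div_eq_geom_sum {θ : ℝ} (hθ : θ ≠ 0) (j : ℕ) :
    (1 - exp (-(j : ℝ) * θ)) / (1 - exp (-θ)) = ∑ k ∈ range j, exp (-θ) ^ k := by
  have hne : exp (-θ) ≠ 1 := by simpa using hθ
  rw [geom_sum_eq hne, ← exp_nat_mul, ← neg_div_neg_eq, neg_sub, neg_sub, neg_mul, mul_neg]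

/-- The generating polynomial of the permutations of `J` letters by number of inversions. -/
noncomputable def mallowsPoly (J : ℕ) : ℝ[X] :=
  ∏ j ∈ Icc 1 J, ∑ k ∈ range j, X ^ k

theorem mallowsPsi_eq_eval_mallowsPoly (J : ℕ) {θ : ℝ} (hθ : θ ≠ 0) :
    mallowsPsi J θ = (mallowsPoly J).eval (exp (-θ)) := by
  simp only [mallowsPsi, mallowsPoly, eval_prod, eval_finsetSum, eval_pow, eval_X,
    one_sub_exp_neg_mul_div_eq_geom_sum hθ]

theorem mallowsPoly_coeff_nonneg (J n : ℕ) : 0 ≤ (mallowsPoly J).coeff n :=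
  coeff_prod_nonneg (fun j _ m => by
    simp only [finsetSum_coeff, coeff_X_pow, sum_ite_eq, mem_range]
    positivity) n

theorem mallowsPoly_natDegree_pos {J : ℕ} (hJ : 2 ≤ J) : 0 < (mallowsPoly J).natDegree := by
  have hmonic : ∀ j ∈ Icc 1 J, (∑ k ∈ range j, (X : ℝ[X]) ^ k).Monic := fun j hj =>
    monic_geom_sum_X (by rw [mem_Icc] at hj; omega)
  have hfactor : (∑ k ∈ range 2, (X : ℝ[X]) ^ k).natDegree = 1 := by
    rw [sum_range_succ, sum_range_one, pow_zero, pow_one, add_comm, ← C_1, natDegree_X_add_C]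
  rw [mallowsPoly, natDegree_prod_of_monic _ _ hmonic]
  calc 0 < (∑ k ∈ range 2, (X : ℝ[X]) ^ k).natDegree := by rw [hfactor]; exact one_pos
    _ ≤ _ := single_le_sum (f := fun j => (∑ k ∈ range j, (X : ℝ[X]) ^ k).natDegree)
      (fun _ _ => Nat.zero_le _) (mem_Icc.2 ⟨one_le_two, hJ⟩)

theorem mallowsPsi_strictConvexOn (J : ℕ) (hJ : 2 ≤ J) :
    StrictConvexOn ℝ (Set.Ioi (0 : ℝ)) (mallowsPsi J) := by
  have hP :=
    strictConvexOn_eval_exp_neg (mallowsPoly_coeff_nonneg J) (mallowsPoly_natDegree_pos hJ)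
  refine (hP.subset (Set.subset_univ _) (convex_Ioi 0)).congr fun θ hθ => ?_
  exact (mallowsPsi_eq_eval_mallowsPoly J (ne_of_gt hθ)).symm
end

section
/- For every integer J ≥ 2, the function θ ↦ log ψ(θ) is strictly convex on the interval (0, ∞). -/
open Real Finset

theorem strictConvexOn_finset_sum {𝕜 E β ι : Type*} [Semiring 𝕜] [PartialOrder 𝕜]
    [AddCommMonoid E] [AddCommMonoid β] [PartialOrder β] [IsOrderedCancelAddMonoid β]
    [SMul 𝕜 E] [DistribMulAction 𝕜 β] {D : Set E} {s : Finset ι} (hs : s.Nonempty)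
    {f : ι → E → β} (hf : ∀ i ∈ s, StrictConvexOn 𝕜 D (f i)) :
    StrictConvexOn 𝕜 D (fun x ↦ ∑ i ∈ s, f i x) := by
  induction hs using Nonempty.cons_induction with
  | singleton i => simpa using hf i (mem_singleton_self i)
  | cons i s hi hs ih =>
    simp only [sum_cons]
    exact (hf i (mem_cons_self i s)).add (ih fun j hj ↦ hf j (mem_cons_of_mem hj))

lemma strictConvexOn_of_hasDerivAt2_pos {D : Set ℝ} (hD : Convex ℝ D) (hD' : IsOpen D)
    {f f' f'' : ℝ → ℝ} (hf' : ∀ x ∈ D, HasDerivAt f (f' x) x)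
    (hf'' : ∀ x ∈ D, HasDerivAt f' (f'' x) x) (hf''₀ : ∀ x ∈ D, 0 < f'' x) :
    StrictConvexOn ℝ D f := by
  have hf'_mono : StrictMonoOn f' D :=
    strictMonoOn_of_deriv_pos hD (fun x hx ↦ (hf'' x hx).continuousAt.continuousWithinAt)
      fun x hx ↦ (hf'' x (interior_subset hx)).deriv ▸ hf''₀ x (interior_subset hx)
  refine StrictMonoOn.strictConvexOn_of_deriv hD
    (fun x hx ↦ (hf' x hx).continuousAt.continuousWithinAt) ?_
  rw [hD'.interior_eq]
  exact hf'_mono.congr fun x hx ↦ (hf' x hx).deriv.symm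

theorem Real.nat_mul_sinh_lt_sinh_nat_mul {n : ℕ} (hn : 2 ≤ n) {x : ℝ} (hx : 0 < x) :
    n * sinh x < sinh (n * x) := by
  have hsinh : 0 < sinh x := sinh_pos_iff.2 hx
  have hcosh : 1 < cosh x := one_lt_cosh.2 hx.ne'
  induction n, hn using Nat.le_induction with
  | base =>
    rw [Nat.cast_two, sinh_two_mul]
    nlinarith
  | succ k hk ih =>
    have hsinh_k : 0 < sinh (k * x) := sinh_pos_iff.2 (by positivity)
    have hcosh_k : 1 ≤ cosh (k * x) := one_le_cosh _
    rw [Nat.cast_succ, add_one_mul (k : ℝ) x, sinh_add]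
    nlinarith

theorem Real.one_sub_exp_neg (x : ℝ) : 1 - exp (-x) = 2 * exp (-(x / 2)) * sinh (x / 2) := by
  have hsq : exp (-x) = exp (-(x / 2)) * exp (-(x / 2)) := by rw [← exp_add]; ring_nf
  have hinv : exp (-(x / 2)) * exp (x / 2) = 1 := by rw [← exp_add]; simp
  rw [sinh_eq]
  linear_combination -hsq - hinv

theorem Real.exp_neg_div_one_sub_exp_neg_sq (x : ℝ) :
    exp (-x) / (1 - exp (-x)) ^ 2 = (2 * sinh (x / 2))⁻¹ ^ 2 := by
  have hsq : exp (-x) = exp (-(x / 2)) ^ 2 := by rw [← exp_nat_mul]; ring_nf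
  rw [one_sub_exp_neg, hsq, show (2 * exp (-(x / 2)) * sinh (x / 2)) ^ 2 =
    exp (-(x / 2)) ^ 2 * (2 * sinh (x / 2)) ^ 2 by ring, div_mul_cancel_left₀ (by positivity), inv_pow]

lemma one_sub_exp_neg_mul_ne_zero {c θ : ℝ} (h : c * θ ≠ 0) : 1 - exp (-c * θ) ≠ 0 := by
  rwa [sub_ne_zero, ne_comm, Ne, exp_eq_one_iff, neg_mul, neg_eq_zero]

lemma hasDerivAt_log_one_sub_exp_neg_mul {c θ : ℝ} (h : c * θ ≠ 0) :
    HasDerivAt (fun t ↦ log (1 - exp (-c * t)))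
      (c * exp (-c * θ) / (1 - exp (-c * θ))) θ := by
  have hlin : HasDerivAt (fun t ↦ -c * t) (-c) θ := by simpa using (hasDerivAt_id θ).const_mul (-c)
  convert (hlin.exp.const_sub 1).log (one_sub_exp_neg_mul_ne_zero h) using 1
  field_simp

lemma hasDerivAt_mul_exp_neg_mul_div_one_sub_exp_neg_mul {c θ : ℝ} (h : c * θ ≠ 0) :
    HasDerivAt (fun t ↦ c * exp (-c * t) / (1 - exp (-c * t)))
      (-(c / (2 * sinh (c * θ / 2))) ^ 2) θ := by
  have hne := one_sub_exp_neg_mul_ne_zero h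
  have hlin : HasDerivAt (fun t ↦ -c * t) (-c) θ := by simpa using (hasDerivAt_id θ).const_mul (-c)
  refine ((hlin.exp.const_mul c).div (hlin.exp.const_sub 1) hne).congr_deriv ?_
  rw [div_pow, div_eq_mul_inv (c ^ 2), ← inv_pow, ← exp_neg_div_one_sub_exp_neg_sq, ← neg_mul]
  field_simp
  ring

lemma strictConvexOn_log_mallowsPsi_factor {n : ℕ} (hn : 2 ≤ n) :
    StrictConvexOn ℝ (Set.Ioi 0) (fun θ ↦ log ((1 - exp (-(n : ℝ) * θ)) / (1 - exp (-θ)))) := by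
  have hn₀ : (0 : ℝ) < n := by positivity
  have hne : ∀ {c θ : ℝ}, 0 < c → 0 < θ → c * θ ≠ 0 := fun hc hθ ↦ (mul_pos hc hθ).ne'
  have heq : Set.EqOn (fun θ ↦ log (1 - exp (-n * θ)) - log (1 - exp (-1 * θ)))
      (fun θ ↦ log ((1 - exp (-(n : ℝ) * θ)) / (1 - exp (-θ)))) (Set.Ioi 0) := fun θ hθ ↦ by
    have hden : 1 - exp (-θ) ≠ 0 := by simpa using one_sub_exp_neg_mul_ne_zero (hne one_pos hθ)
    simpa only [neg_one_mul] using (log_div (one_sub_exp_neg_mul_ne_zero (hne hn₀ hθ)) hden).symm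
  have hcurv : ∀ θ ∈ Set.Ioi (0 : ℝ),
      (n / (2 * sinh (n * θ / 2))) ^ 2 < (1 / (2 * sinh (1 * θ / 2))) ^ 2 := fun θ hθ ↦ by
    have hsinh : 0 < sinh (θ / 2) := sinh_pos_iff.2 (half_pos hθ)
    have hlt := nat_mul_sinh_lt_sinh_nat_mul hn (half_pos hθ)
    have hsinh_n : 0 < sinh (n * (θ / 2)) := by linarith [mul_pos hn₀ hsinh]
    rw [mul_div_assoc, one_mul]
    refine pow_lt_pow_left₀ ?_ (by positivity) two_ne_zero
    rw [div_lt_div_iff₀ (by positivity) (by positivity)]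
    linarith
  refine (strictConvexOn_of_hasDerivAt2_pos (convex_Ioi 0) isOpen_Ioi
    (fun θ hθ ↦ (hasDerivAt_log_one_sub_exp_neg_mul (hne hn₀ hθ)).fun_sub
      (hasDerivAt_log_one_sub_exp_neg_mul (hne one_pos hθ)))
    (fun θ hθ ↦ (hasDerivAt_mul_exp_neg_mul_div_one_sub_exp_neg_mul (hne hn₀ hθ)).fun_sub
      (hasDerivAt_mul_exp_neg_mul_div_one_sub_exp_neg_mul (hne one_pos hθ)))
    fun θ hθ ↦ ?_).congr heq
  linarith [hcurv θ hθ]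

lemma log_mallowsPsi_eq_sum (J : ℕ) {θ : ℝ} (hθ : θ ≠ 0) :
    log (mallowsPsi J θ) = ∑ j ∈ Ioc 1 J, log ((1 - exp (-(j : ℝ) * θ)) / (1 - exp (-θ))) := by
  have hden : 1 - exp (-θ) ≠ 0 := by
    simpa using one_sub_exp_neg_mul_ne_zero (c := 1) (by simpa using hθ)
  have hfactor_one : (1 - exp (-((1 : ℕ) : ℝ) * θ)) / (1 - exp (-θ)) = 1 := by
    rw [Nat.cast_one, neg_one_mul, div_self hden]
  rw [mallowsPsi, ← prod_subset Ioc_subset_Icc_self, log_prod]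
  · intro j hj
    have hj₀ : (j : ℝ) * θ ≠ 0 := mul_ne_zero (Nat.cast_ne_zero.2 (Nat.zero_lt_of_lt (mem_Ioc.1 hj).1).ne') hθ
    exact div_ne_zero (by simpa using one_sub_exp_neg_mul_ne_zero hj₀) hden
  · intro j hj hj'
    obtain rfl : j = 1 := by rw [mem_Icc] at hj; rw [mem_Ioc] at hj'; omega
    exact hfactor_one

theorem log_mallowsPsi_strictConvexOn (J : ℕ) (hJ : 2 ≤ J) :
    StrictConvexOn ℝ (Set.Ioi (0 : ℝ)) (fun θ : ℝ => Real.log (mallowsPsi J θ)) := by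
  have hfactors : ∀ j ∈ Ioc 1 J, StrictConvexOn ℝ (Set.Ioi 0)
      (fun θ ↦ log ((1 - exp (-(j : ℝ) * θ)) / (1 - exp (-θ)))) := fun j hj ↦
    strictConvexOn_log_mallowsPsi_factor (mem_Ioc.1 hj).1
  exact (strictConvexOn_finset_sum ⟨2, mem_Ioc.2 ⟨one_lt_two, hJ⟩⟩ hfactors).congr fun θ hθ ↦
    (log_mallowsPsi_eq_sum J (ne_of_gt hθ)).symm
end

section
/- For every integer J ≥ 2 and every θ > 0, κ(θ) > 0; that is, J e^{−θ}/(1 − e^{−θ}) > Σ_{j=1}^J j e^{−jθ}/(1 − e^{−jθ}). -/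
/-!
Put `x = e^{-θ} ∈ (0, 1)`. Since `1 - x^j = (1 - x)(1 + x + ⋯ + x^{j-1})` and `x^{j-1}` is the
smallest of these `j` powers, the `j`-th summand `j x^j / (1 - x^j)` is at most `x / (1 - x)`,
with equality only for `j = 1`. Summing over `j = 1, …, J` with `J ≥ 2` gives a strict inequality.
-/

/-- `κ(θ) = J e^{−θ}/(1 − e^{−θ}) − Σ_{j=1}^J j e^{−jθ}/(1 − e^{−jθ})`. -/
noncomputable def mallowsKappa (J : ℕ) (θ : ℝ) : ℝ :=
  (J : ℝ) * Real.exp (-θ) / (1 - Real.exp (-θ)) -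
    ∑ j ∈ Finset.Icc 1 J, (j : ℝ) * Real.exp (-(j : ℝ) * θ) / (1 - Real.exp (-(j : ℝ) * θ))

open Finset

lemma natCast_mul_pow_pred_lt_geom_sum {x : ℝ} (hx0 : 0 ≤ x) (hx1 : x < 1) {j : ℕ} (hj : 2 ≤ j) :
    (j : ℝ) * x ^ (j - 1) < ∑ i ∈ range j, x ^ i := by
  have hle : ∀ i ∈ range j, x ^ (j - 1) ≤ x ^ i := fun i hi =>
    pow_le_pow_of_le_one hx0 hx1.le (by have := mem_range.mp hi; omega)
  have hlt : x ^ (j - 1) < x ^ 0 := by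
    rw [pow_zero]
    exact pow_lt_one₀ hx0 hx1 (by omega)
  calc (j : ℝ) * x ^ (j - 1) = ∑ _i ∈ range j, x ^ (j - 1) := by simp
    _ < ∑ i ∈ range j, x ^ i := sum_lt_sum hle ⟨0, mem_range.mpr (by omega), hlt⟩

lemma natCast_mul_pow_div_one_sub_pow_lt {x : ℝ} (hx0 : 0 < x) (hx1 : x < 1) {j : ℕ}
    (hj : 2 ≤ j) : (j : ℝ) * x ^ j / (1 - x ^ j) < x / (1 - x) := by
  have hxj : 0 < 1 - x ^ j := sub_pos.mpr (pow_lt_one₀ hx0.le hx1 (by omega))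
  have hpow : x ^ j = x * x ^ (j - 1) := by rw [← pow_succ']; congr 1; omega
  rw [div_lt_div_iff₀ hxj (sub_pos.mpr hx1), ← mul_neg_geom_sum]
  calc (j : ℝ) * x ^ j * (1 - x) = x * (1 - x) * ((j : ℝ) * x ^ (j - 1)) := by rw [hpow]; ring
    _ < x * (1 - x) * ∑ i ∈ range j, x ^ i :=
        mul_lt_mul_of_pos_left (natCast_mul_pow_pred_lt_geom_sum hx0.le hx1 hj)
          (mul_pos hx0 (sub_pos.mpr hx1))
    _ = x * ((1 - x) * ∑ i ∈ range j, x ^ i) := by ring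

lemma natCast_mul_pow_div_one_sub_pow_le {x : ℝ} (hx0 : 0 < x) (hx1 : x < 1) {j : ℕ}
    (hj : 1 ≤ j) : (j : ℝ) * x ^ j / (1 - x ^ j) ≤ x / (1 - x) := by
  rcases hj.eq_or_lt with rfl | hj
  · simp
  · exact (natCast_mul_pow_div_one_sub_pow_lt hx0 hx1 hj).le

theorem mallowsKappa_pos (J : ℕ) (hJ : 2 ≤ J) (θ : ℝ) (hθ : 0 < θ) :
    0 < mallowsKappa J θ ∧
      ∑ j ∈ Finset.Icc 1 J, (j : ℝ) * Real.exp (-(j : ℝ) * θ) / (1 - Real.exp (-(j : ℝ) * θ)) <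
        (J : ℝ) * Real.exp (-θ) / (1 - Real.exp (-θ)) := by
  set x := Real.exp (-θ)
  have hx0 : 0 < x := Real.exp_pos _
  have hx1 : x < 1 := Real.exp_lt_one_iff.mpr (neg_neg_of_pos hθ)
  have hexp (j : ℕ) : Real.exp (-(j : ℝ) * θ) = x ^ j := by
    rw [← Real.exp_nat_mul]; ring_nf
  have key : ∑ j ∈ Icc 1 J, (j : ℝ) * Real.exp (-(j : ℝ) * θ) / (1 - Real.exp (-(j : ℝ) * θ))
      < (J : ℝ) * x / (1 - x) := by
    have hconst : (J : ℝ) * x / (1 - x) = ∑ _j ∈ Icc 1 J, x / (1 - x) := by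
      rw [sum_const, Nat.card_Icc, Nat.add_sub_cancel, nsmul_eq_mul, mul_div_assoc]
    simp only [hconst, hexp]
    refine sum_lt_sum (fun j hj => natCast_mul_pow_div_one_sub_pow_le hx0 hx1 (mem_Icc.mp hj).1)
      ⟨2, mem_Icc.mpr ⟨by norm_num, hJ⟩, ?_⟩
    exact_mod_cast natCast_mul_pow_div_one_sub_pow_lt hx0 hx1 le_rfl
  exact ⟨sub_pos.mpr key, key⟩
end

section
/- For every integer J ≥ 1 and every θ > 0, the expected Kendall tau distance under the Mallows model equals κ(θ): Σ_{σ ∈ Perm(Fin J)} inv(σ)·e^{−θ·inv(σ)} / Σ_{σ ∈ Perm(Fin J)} e^{−θ·inv(σ)} = J e^{−θ}/(1 − e^{−θ}) − Σ_{j=1}^J j e^{−jθ}/(1 − e^{−jθ}). -/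
/-!
Writing `σ 0 = p` and recording the relative order of the remaining values as `τ ∈ S_{J-1}`
gives a bijection `Fin J × S_{J-1} ≃ S_J` under which `inv σ = p + inv τ`. Hence the Mallows
weight `q ^ inv σ` (with `q = e^{-θ}`) factors, the Mallows distribution of `inv` is the law of
a sum of independent truncated geometric variables on `{0, …, j-1}`, `j = 1, …, J`, and the
mean is the sum of their means `q / (1 - q) - j q^j / (1 - q^j)`.
-/

/-- The inversion number of a permutation `σ` of `Fin J`: the number of pairs `(i, k)`
with `i < k` and `σ i > σ k`. -/
def inversions {J : ℕ} (σ : Equiv.Perm (Fin J)) : ℕ :=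
  (Finset.univ.filter (fun q : Fin J × Fin J => q.1 < q.2 ∧ σ q.2 < σ q.1)).card

open Finset

lemma inversions_eq_sum {J : ℕ} (σ : Equiv.Perm (Fin J)) :
    inversions σ = ∑ i, ∑ k, if i < k ∧ σ k < σ i then 1 else 0 := by
  rw [inversions, card_filter, Fintype.sum_prod_type]

def consPerm {n : ℕ} (p : Fin (n + 1)) (τ : Equiv.Perm (Fin n)) : Equiv.Perm (Fin (n + 1)) :=
  (finSuccEquiv n).trans ((Equiv.optionCongr τ).trans (finSuccEquiv' p).symm)

section consPerm
variable {n : ℕ} (p : Fin (n + 1)) (τ : Equiv.Perm (Fin n))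

@[simp] lemma consPerm_zero : consPerm p τ 0 = p := by simp [consPerm]

@[simp] lemma consPerm_succ (i : Fin n) : consPerm p τ i.succ = p.succAbove (τ i) := by
  simp [consPerm]

lemma consPerm_injective :
    Function.Injective (fun x : Fin (n + 1) × Equiv.Perm (Fin n) => consPerm x.1 x.2) := by
  rintro ⟨p, τ⟩ ⟨p', τ'⟩ h
  obtain rfl : p = p' := by simpa using DFunLike.congr_fun h 0
  have hτ : τ = τ' := Equiv.ext fun i => p.succAbove_right_injective <| by
    simpa using DFunLike.congr_fun h i.succ
  rw [hτ]

lemma consPerm_bijective :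
    Function.Bijective (fun x : Fin (n + 1) × Equiv.Perm (Fin n) => consPerm x.1 x.2) := by
  rw [Fintype.bijective_iff_injective_and_card]
  exact ⟨consPerm_injective, by simp [Fintype.card_perm, Nat.factorial_succ]⟩

lemma inversions_consPerm : inversions (consPerm p τ) = p + inversions τ := by
  rw [inversions_eq_sum, inversions_eq_sum, Fin.sum_univ_succ]
  congr 1
  · have hcount : ∑ j : Fin n, (if (j : ℕ) < p then 1 else 0) = (p : ℕ) := by
      rw [← card_filter, Fin.card_filter_val_lt]
      exact min_eq_right (Nat.lt_succ_iff.mp p.isLt)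
    simp only [Fin.sum_univ_succ, lt_self_iff_false, false_and, if_false, zero_add, Fin.succ_pos,
      true_and, consPerm_zero, consPerm_succ, Fin.succAbove_lt_iff_castSucc_lt]
    simp only [Fin.lt_def, Fin.val_castSucc]
    rw [Equiv.sum_comp τ (fun j => if (j : ℕ) < p then 1 else 0), hcount]
  · refine sum_congr rfl fun i _ => ?_
    simp only [Fin.sum_univ_succ, consPerm_succ, (Fin.succ_pos i).not_gt, false_and, if_false,
      zero_add, Fin.succ_lt_succ_iff, Fin.succAbove_lt_succAbove_iff]

noncomputable def consPermEquiv : Fin (n + 1) × Equiv.Perm (Fin n) ≃ Equiv.Perm (Fin (n + 1)) :=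
  Equiv.ofBijective _ consPerm_bijective

end consPerm

def weightedMean {K ι : Type*} [Field K] [Fintype ι] (q : K) (a : ι → ℕ) : K :=
  (∑ i, (a i : K) * q ^ a i) / ∑ i, q ^ a i

section weightedMean
variable {K ι κ : Type*} [Field K] [Fintype ι] [Fintype κ] (q : K)

lemma weightedMean_comp_equiv (e : ι ≃ κ) (a : κ → ℕ) :
    weightedMean q (a ∘ e) = weightedMean q a := by
  simp only [weightedMean, Function.comp_apply, Equiv.sum_comp e (fun k => (a k : K) * q ^ a k),
    Equiv.sum_comp e (fun k => q ^ a k)]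

lemma weightedMean_add {a : ι → ℕ} {b : κ → ℕ} (ha : ∑ i, q ^ a i ≠ 0)
    (hb : ∑ k, q ^ b k ≠ 0) :
    weightedMean q (fun x : ι × κ => a x.1 + b x.2) = weightedMean q a + weightedMean q b := by
  have hsum : ∑ x : ι × κ, q ^ (a x.1 + b x.2) = (∑ i, q ^ a i) * ∑ k, q ^ b k := by
    simp only [pow_add, Fintype.sum_prod_type, sum_mul_sum]
  have hwsum : ∑ x : ι × κ, ((a x.1 + b x.2 : ℕ) : K) * q ^ (a x.1 + b x.2) =
      (∑ i, (a i : K) * q ^ a i) * (∑ k, q ^ b k) +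
        (∑ i, q ^ a i) * ∑ k, (b k : K) * q ^ b k := by
    simp only [Fintype.sum_prod_type, sum_mul_sum, ← sum_add_distrib]
    push_cast
    simp only [pow_add]
    refine sum_congr rfl fun i _ => sum_congr rfl fun k _ => by ring
  simp only [weightedMean, hsum, hwsum]
  field_simp

lemma mul_sum_range_mul_pow (n : ℕ) :
    (1 - q) ^ 2 * ∑ i ∈ range (n + 1), (i : K) * q ^ i =
      q - ((n : K) + 1) * q ^ (n + 1) + n * q ^ (n + 2) := by
  induction n with
  | zero => simp
  | succ m ih =>
    rw [sum_range_succ, mul_add, ih]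
    push_cast
    ring

lemma weightedMean_fin_val {n : ℕ} (hq : q ≠ 1) (hqn : q ^ (n + 1) ≠ 1) :
    weightedMean q (fun p : Fin (n + 1) => (p : ℕ)) =
      q / (1 - q) - ((n : K) + 1) * q ^ (n + 1) / (1 - q ^ (n + 1)) := by
  have h1 : (1 : K) - q ≠ 0 := sub_ne_zero.mpr hq.symm
  have hn : (1 : K) - q ^ (n + 1) ≠ 0 := sub_ne_zero.mpr hqn.symm
  have hgeom : ∑ i ∈ range (n + 1), q ^ i = (1 - q ^ (n + 1)) / (1 - q) := by
    rw [eq_div_iff h1]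
    linear_combination -geom_sum_mul q (n + 1)
  have hwgeom : ∑ i ∈ range (n + 1), (i : K) * q ^ i =
      (q - ((n : K) + 1) * q ^ (n + 1) + n * q ^ (n + 2)) / (1 - q) ^ 2 := by
    rw [eq_div_iff (pow_ne_zero 2 h1), mul_comm, mul_sum_range_mul_pow]
  rw [weightedMean, Fin.sum_univ_eq_sum_range (fun i => (i : K) * q ^ i),
    Fin.sum_univ_eq_sum_range (q ^ ·), hgeom, hwgeom]
  field_simp
  ring

end weightedMean

lemma sum_pow_pos {K ι : Type*} [Field K] [LinearOrder K] [IsStrictOrderedRing K] [Fintype ι]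
    [Nonempty ι] {q : K} (hq : 0 < q) (a : ι → ℕ) : 0 < ∑ i, q ^ a i :=
  sum_pos (fun _ _ => pow_pos hq _) univ_nonempty

lemma weightedMean_inversions {K : Type*} [Field K] [LinearOrder K] [IsStrictOrderedRing K]
    {q : K} (hq0 : 0 < q) (hq1 : q < 1) (J : ℕ) :
    weightedMean q (inversions (J := J)) =
      J * q / (1 - q) - ∑ j ∈ Icc 1 J, (j : K) * q ^ j / (1 - q ^ j) := by
  induction J with
  | zero => simp [weightedMean, inversions]
  | succ n ih =>
    have hsplit : inversions ∘ consPermEquiv = fun x : Fin (n + 1) × Equiv.Perm (Fin n) =>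
        (x.1 : ℕ) + inversions x.2 :=
      funext fun x => inversions_consPerm x.1 x.2
    rw [← weightedMean_comp_equiv q consPermEquiv, hsplit,
      weightedMean_add q (sum_pow_pos hq0 _).ne' (sum_pow_pos hq0 _).ne', ih,
      weightedMean_fin_val q hq1.ne (pow_lt_one₀ hq0.le hq1 n.succ_ne_zero).ne,
      sum_Icc_succ_top (Nat.le_add_left 1 n)]
    push_cast
    ring

theorem mallows_mean_kendall_distance_general (J : ℕ) (θ : ℝ) (hθ : 0 < θ) :
    (∑ σ : Equiv.Perm (Fin J), (inversions σ : ℝ) * Real.exp (-θ * inversions σ)) /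
        (∑ σ : Equiv.Perm (Fin J), Real.exp (-θ * inversions σ)) =
      (J : ℝ) * Real.exp (-θ) / (1 - Real.exp (-θ)) -
        ∑ j ∈ Finset.Icc 1 J, (j : ℝ) * Real.exp (-(j : ℝ) * θ) / (1 - Real.exp (-(j : ℝ) * θ)) := by
  have hpow (k : ℕ) : Real.exp (-θ * k) = Real.exp (-θ) ^ k := by
    rw [mul_comm, Real.exp_nat_mul]
  have hpow' (k : ℕ) : Real.exp (-(k : ℝ) * θ) = Real.exp (-θ) ^ k := by
    rw [neg_mul, ← mul_neg, Real.exp_nat_mul]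
  simp only [hpow, hpow']
  exact weightedMean_inversions (Real.exp_pos _) (Real.exp_lt_one_iff.mpr (neg_neg_of_pos hθ)) J

theorem mallows_mean_kendall_distance (J : ℕ) (hJ : 1 ≤ J) (θ : ℝ) (hθ : 0 < θ) :
    (∑ σ : Equiv.Perm (Fin J), (inversions σ : ℝ) * Real.exp (-θ * inversions σ)) /
        (∑ σ : Equiv.Perm (Fin J), Real.exp (-θ * inversions σ)) =
      (J : ℝ) * Real.exp (-θ) / (1 - Real.exp (-θ)) -
        ∑ j ∈ Finset.Icc 1 J, (j : ℝ) * Real.exp (-(j : ℝ) * θ) / (1 - Real.exp (-(j : ℝ) * θ)) :=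
  mallows_mean_kendall_distance_general J θ hθ
end

section
/- For every integer J ≥ 1 and every θ > 0, the variance of the Kendall tau distance under the Mallows model satisfies Σ_{σ ∈ Perm(Fin J)} inv(σ)²·e^{−θ·inv(σ)} / Σ_{σ ∈ Perm(Fin J)} e^{−θ·inv(σ)} − (Σ_{σ ∈ Perm(Fin J)} inv(σ)·e^{−θ·inv(σ)} / Σ_{σ ∈ Perm(Fin J)} e^{−θ·inv(σ)})² = J e^{−θ}/(1 − e^{−θ})² − Σ_{j=1}^J j² e^{−jθ}/(1 − e^{−jθ})². -/
/-!
Sending `(p, τ)` to the permutation `0 ↦ p`, `i + 1 ↦ p.succAbove (τ i)` is a bijection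
`Fin (n + 1) × Perm (Fin n) ≃ Perm (Fin (n + 1))` under which `inv = p + inv τ`. Hence, under
the Mallows weights `exp (-θ * inv)`, the inversion number is a sum of independent truncated
geometric variables on `{0, …, j - 1}`, `j = 1, …, J`. Variances add, and the truncated geometric
law with ratio `x = exp (-θ)` on `j` points has variance `x / (1 - x)² - j² xʲ / (1 - xʲ)²`.
-/

open Finset Equiv

section GeomSum

variable {R : Type*} [CommRing R]

theorem sum_range_mul_pow_mul_one_sub_sq (x : R) (m : ℕ) :
    (∑ p ∈ range m, (p : R) * x ^ p) * (1 - x) ^ 2 =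
      x - m * x ^ m + (m - 1) * x ^ (m + 1) := by
  induction m with
  | zero => simp
  | succ m ih =>
    rw [sum_range_succ, add_mul, ih]
    push_cast
    ring

theorem sum_range_sq_mul_pow_mul_one_sub_pow_three (x : R) (m : ℕ) :
    (∑ p ∈ range m, (p : R) ^ 2 * x ^ p) * (1 - x) ^ 3 =
      x + x ^ 2 - m ^ 2 * x ^ m + (2 * m ^ 2 - 2 * m - 1) * x ^ (m + 1) -
        (m - 1) ^ 2 * x ^ (m + 2) := by
  induction m with
  | zero => simp
  | succ m ih =>
    rw [sum_range_succ, add_mul, ih]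
    push_cast
    ring

theorem truncated_geometric_variance {K : Type*} [Field K] {x : K} (hx : x ≠ 1) {m : ℕ}
    (hxm : x ^ m ≠ 1) :
    (∑ p ∈ range m, (p : K) ^ 2 * x ^ p) / (∑ p ∈ range m, x ^ p) -
        ((∑ p ∈ range m, (p : K) * x ^ p) / ∑ p ∈ range m, x ^ p) ^ 2 =
      x / (1 - x) ^ 2 - m ^ 2 * x ^ m / (1 - x ^ m) ^ 2 := by
  have h₁ : 1 - x ≠ 0 := sub_ne_zero.mpr hx.symm
  have h₂ : 1 - x ^ m ≠ 0 := sub_ne_zero.mpr hxm.symm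
  rw [eq_div_of_mul_eq h₁ (geom_sum_mul_neg x m),
    eq_div_of_mul_eq (pow_ne_zero 2 h₁) (sum_range_mul_pow_mul_one_sub_sq x m),
    eq_div_of_mul_eq (pow_ne_zero 3 h₁) (sum_range_sq_mul_pow_mul_one_sub_pow_three x m)]
  field_simp
  ring

end GeomSum

section GibbsVariance

variable {α β : Type*} [Fintype α] [Fintype β]

/-- The variance of `s` under the Gibbs probability measure on `α` with weights `exp (-θ * s a)`. -/
noncomputable def gibbsVariance (θ : ℝ) (s : α → ℝ) : ℝ :=
  (∑ a, s a ^ 2 * Real.exp (-θ * s a)) / (∑ a, Real.exp (-θ * s a)) -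
    ((∑ a, s a * Real.exp (-θ * s a)) / ∑ a, Real.exp (-θ * s a)) ^ 2

theorem gibbsVariance_comp_bijective {f : α → β} (hf : f.Bijective) (θ : ℝ) (s : β → ℝ) :
    gibbsVariance θ (s ∘ f) = gibbsVariance θ s := by
  simp only [gibbsVariance, Function.comp_apply,
    hf.sum_comp (fun b => s b ^ 2 * Real.exp (-θ * s b)), hf.sum_comp (fun b => s b * Real.exp (-θ * s b)), hf.sum_comp (fun b => Real.exp (-θ * s b))]

theorem gibbsVariance_unique [Unique α] (θ : ℝ) (s : α → ℝ) : gibbsVariance θ s = 0 := by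
  have := (Real.exp_pos (-θ * s default)).ne'
  simp only [gibbsVariance, Fintype.sum_unique]
  field_simp
  ring

theorem gibbsVariance_prod_add [Nonempty α] [Nonempty β] (θ : ℝ) (s : α → ℝ) (t : β → ℝ) :
    gibbsVariance θ (fun q : α × β => s q.1 + t q.2) = gibbsVariance θ s + gibbsVariance θ t := by
  have hZs : ∑ a, Real.exp (-θ * s a) ≠ 0 := (sum_pos (fun _ _ => Real.exp_pos _) univ_nonempty).ne'
  have hZt : ∑ b, Real.exp (-θ * t b) ≠ 0 := (sum_pos (fun _ _ => Real.exp_pos _) univ_nonempty).ne'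
  have hZ : ∑ q : α × β, Real.exp (-θ * (s q.1 + t q.2)) =
      (∑ a, Real.exp (-θ * s a)) * ∑ b, Real.exp (-θ * t b) := by
    simp only [Fintype.sum_prod_type, Fintype.sum_mul_sum, mul_add, Real.exp_add]
  have hM1 : ∑ q : α × β, (s q.1 + t q.2) * Real.exp (-θ * (s q.1 + t q.2)) =
      (∑ a, s a * Real.exp (-θ * s a)) * (∑ b, Real.exp (-θ * t b)) +
        (∑ a, Real.exp (-θ * s a)) * ∑ b, t b * Real.exp (-θ * t b) := by
    simp only [Fintype.sum_prod_type, Fintype.sum_mul_sum, ← sum_add_distrib]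
    exact sum_congr rfl fun a _ => sum_congr rfl fun b _ => by rw [mul_add, Real.exp_add]; ring
  have hM2 : ∑ q : α × β, (s q.1 + t q.2) ^ 2 * Real.exp (-θ * (s q.1 + t q.2)) =
      (∑ a, s a ^ 2 * Real.exp (-θ * s a)) * (∑ b, Real.exp (-θ * t b)) +
        2 * ((∑ a, s a * Real.exp (-θ * s a)) * ∑ b, t b * Real.exp (-θ * t b)) +
        (∑ a, Real.exp (-θ * s a)) * ∑ b, t b ^ 2 * Real.exp (-θ * t b) := by
    simp only [Fintype.sum_prod_type, Fintype.sum_mul_sum, mul_sum (a := (2 : ℝ)),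
      ← sum_add_distrib]
    exact sum_congr rfl fun a _ => sum_congr rfl fun b _ => by rw [mul_add, Real.exp_add]; ring
  have hvar (Zs Zt A₁ A₂ B₁ B₂ : ℝ) (hs : Zs ≠ 0) (ht : Zt ≠ 0) :
      (A₂ * Zt + 2 * (A₁ * B₁) + Zs * B₂) / (Zs * Zt) - ((A₁ * Zt + Zs * B₁) / (Zs * Zt)) ^ 2 =
        A₂ / Zs - (A₁ / Zs) ^ 2 + (B₂ / Zt - (B₁ / Zt) ^ 2) := by
    field_simp
    ring
  simp only [gibbsVariance]
  rw [hZ, hM1, hM2]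
  exact hvar _ _ _ _ _ _ hZs hZt

end GibbsVariance

theorem gibbsVariance_fin_val {θ : ℝ} (hθ : θ ≠ 0) {m : ℕ} (hm : m ≠ 0) :
    gibbsVariance θ (fun p : Fin m => (p : ℝ)) =
      Real.exp (-θ) / (1 - Real.exp (-θ)) ^ 2 -
        m ^ 2 * Real.exp (-m * θ) / (1 - Real.exp (-m * θ)) ^ 2 := by
  have hpow (k : ℕ) : Real.exp (-θ * k) = Real.exp (-θ) ^ k := by
    rw [← Real.exp_nat_mul, mul_comm]
  have hx : Real.exp (-θ) ≠ 1 := by simpa using hθ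
  have hxm : Real.exp (-θ) ^ m ≠ 1 := by simpa [← hpow] using ⟨hθ, hm⟩
  rw [show -(m : ℝ) * θ = -θ * m by ring, hpow, ← truncated_geometric_variance hx hxm]
  simp only [gibbsVariance, hpow]
  rw [Fin.sum_univ_eq_sum_range (fun p => (p : ℝ) ^ 2 * Real.exp (-θ) ^ p),
    Fin.sum_univ_eq_sum_range (fun p => (p : ℝ) * Real.exp (-θ) ^ p),
    Fin.sum_univ_eq_sum_range (fun p => Real.exp (-θ) ^ p)]

def permCons {n : ℕ} (p : Fin (n + 1)) (τ : Perm (Fin n)) : Perm (Fin (n + 1)) :=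
  (finSuccEquiv n).trans (τ.optionCongr.trans (finSuccEquiv' p).symm)

@[simp] theorem permCons_zero {n : ℕ} (p : Fin (n + 1)) (τ : Perm (Fin n)) :
    permCons p τ 0 = p := by
  simp [permCons]

@[simp] theorem permCons_succ {n : ℕ} (p : Fin (n + 1)) (τ : Perm (Fin n)) (i : Fin n) :
    permCons p τ i.succ = p.succAbove (τ i) := by
  simp [permCons]

theorem permCons_bijective (n : ℕ) :
    Function.Bijective (fun q : Fin (n + 1) × Perm (Fin n) => permCons q.1 q.2) := by
  refine (Fintype.bijective_iff_injective_and_card _).mpr ⟨?_, ?_⟩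
  · rintro ⟨p, τ⟩ ⟨p', τ'⟩ h
    obtain rfl : p = p' := by simpa using congr($h 0)
    obtain rfl : τ = τ' := Equiv.ext fun i => by simpa using congr($h i.succ)
    rfl
  · simp [Fintype.card_perm, Nat.factorial_succ]

theorem card_filter_castSucc_lt {n : ℕ} (p : Fin (n + 1)) : #{m : Fin n | m.castSucc < p} = p := by
  simp only [Fin.lt_def, Fin.val_castSucc, Fin.card_filter_val_lt]
  omega

theorem inversions_permCons {n : ℕ} (p : Fin (n + 1)) (τ : Perm (Fin n)) :
    inversions (permCons p τ) = p + inversions τ := by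
  simp only [inversions, card_filter, Fintype.sum_prod_type, Fin.sum_univ_succ, permCons_zero,
    permCons_succ, false_and, Fin.not_lt_zero, Fin.succ_pos, true_and,
    Fin.succ_lt_succ_iff, Fin.succAbove_lt_succAbove_iff, Fin.succAbove_lt_iff_castSucc_lt,
    if_false, zero_add]
  rw [← card_filter_castSucc_lt p, card_filter,
    Equiv.sum_comp τ (fun m => if m.castSucc < p then 1 else 0)]

theorem gibbsVariance_inversions (θ : ℝ) (n : ℕ) :
    gibbsVariance θ (fun σ : Perm (Fin n) => (inversions σ : ℝ)) =
      ∑ j ∈ Icc 1 n, gibbsVariance θ (fun p : Fin j => (p : ℝ)) := by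
  induction n with
  | zero => simp [gibbsVariance_unique]
  | succ n ih =>
    rw [sum_Icc_succ_top (by omega), ← ih, add_comm (gibbsVariance _ _), ← gibbsVariance_prod_add,
      ← gibbsVariance_comp_bijective (permCons_bijective n)]
    simp [Function.comp_def, inversions_permCons]

theorem mallows_variance_kendall_distance_general (J : ℕ) (θ : ℝ) (hθ : 0 < θ) :
    (∑ σ : Equiv.Perm (Fin J), (inversions σ : ℝ) ^ 2 * Real.exp (-θ * inversions σ)) /
          (∑ σ : Equiv.Perm (Fin J), Real.exp (-θ * inversions σ)) -
        ((∑ σ : Equiv.Perm (Fin J), (inversions σ : ℝ) * Real.exp (-θ * inversions σ)) /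
          (∑ σ : Equiv.Perm (Fin J), Real.exp (-θ * inversions σ))) ^ 2 =
      (J : ℝ) * Real.exp (-θ) / (1 - Real.exp (-θ)) ^ 2 -
        ∑ j ∈ Finset.Icc 1 J,
          (j : ℝ) ^ 2 * Real.exp (-(j : ℝ) * θ) / (1 - Real.exp (-(j : ℝ) * θ)) ^ 2 := by
  change gibbsVariance θ (fun σ : Perm (Fin J) => (inversions σ : ℝ)) = _
  rw [gibbsVariance_inversions,
    sum_congr rfl fun j hj => gibbsVariance_fin_val hθ.ne' (by grind),
    sum_sub_distrib, sum_const, Nat.card_Icc, nsmul_eq_mul, Nat.add_sub_cancel, mul_div_assoc]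

theorem mallows_variance_kendall_distance (J : ℕ) (hJ : 1 ≤ J) (θ : ℝ) (hθ : 0 < θ) :
    (∑ σ : Equiv.Perm (Fin J), (inversions σ : ℝ) ^ 2 * Real.exp (-θ * inversions σ)) /
          (∑ σ : Equiv.Perm (Fin J), Real.exp (-θ * inversions σ)) -
        ((∑ σ : Equiv.Perm (Fin J), (inversions σ : ℝ) * Real.exp (-θ * inversions σ)) /
          (∑ σ : Equiv.Perm (Fin J), Real.exp (-θ * inversions σ))) ^ 2 =
      (J : ℝ) * Real.exp (-θ) / (1 - Real.exp (-θ)) ^ 2 -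
        ∑ j ∈ Finset.Icc 1 J,
          (j : ℝ) ^ 2 * Real.exp (-(j : ℝ) * θ) / (1 - Real.exp (-(j : ℝ) * θ)) ^ 2 :=
  mallows_variance_kendall_distance_general J θ hθ
end
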